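/- arXiv:2506.18132 — 4 statements merged into one kernel-verified Lean document; each statement's English description precedes it below -/
import Mathlib

section
/- Let X and Y be independent Geometric(p) random variables (on {1,2,...}) and let Z := X − Y. Let W be defined from Z by: W = Z if Z is odd; if Z is even, W = Z+1 or W = Z−1 each with probability 1/2 (independently of Z). Then for every integer k ≥ 0, P(|W| + 1 = 2(k+1)) = (1−p)^{2k} (1 − (1−p)^2); i.e. (|W|+1)/2 is Geometric with parameter 1−(1−p)^2. -/
/-!
The difference `Z = X - Y` satisfies `P(Z = z) = p/(2-p) * (1-p)^|z|`: for `z ≥ 0` sum the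
geometric series `P(X = z + j + 1) P(Y = j + 1)` over `j`, and swap `X` and `Y` for `z < 0`.
An odd value `n` of `W` comes from `Z = n`, or from `Z = n ± 1` with the coin pointing to `n`,
so `P(W = n) = P(Z = n) + (P(Z = n + 1) + P(Z = n - 1))/2`. For `n = ±(2k+1)` this equals
`p/(2-p) * (1-p)^(2k) * (2-p)^2/2`, and the two signs add up to `(1-p)^(2k) (1 - (1-p)^2)`.
-/

open MeasureTheory ProbabilityTheory

def roundToOdd (z : ℤ) (b : Bool) : ℤ :=
  if Odd z then z else if b then z - 1 else z + 1

lemma roundToOdd_eq_iff {n : ℤ} (hn : Odd n) (z : ℤ) (b : Bool) :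
    roundToOdd z b = n ↔ z = n ∨ (z = n + 1 ∧ b = true) ∨ (z = n - 1 ∧ b = false) := by
  rw [Int.odd_iff] at hn
  by_cases hz : Odd z <;> rw [Int.odd_iff] at hz <;> cases b <;>
    simp [roundToOdd, Int.odd_iff, hz] <;> omega

lemma ProbabilityTheory.IndepFun.measureReal_inter_preimage_eq_mul {Ω α β : Type*}
    [MeasurableSpace Ω] [MeasurableSpace α] [MeasurableSpace β] {μ : Measure Ω}
    {f : Ω → α} {g : Ω → β} (h : IndepFun f g μ) {s : Set α} {t : Set β}
    (hs : MeasurableSet s) (ht : MeasurableSet t) :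
    μ.real (f ⁻¹' s ∩ g ⁻¹' t) = μ.real (f ⁻¹' s) * μ.real (g ⁻¹' t) := by
  simp only [measureReal_def, h.measure_inter_preimage_eq_mul s t hs ht, ENNReal.toReal_mul]

section

variable {Ω : Type*} [MeasurableSpace Ω] {P : Measure Ω}

lemma measure_sub_eq_natCast_of_geometric {p : ℝ} (hp : 0 < p) (hp1 : p < 1)
    {X Y : Ω → ℤ} (hXm : Measurable X) (hYm : Measurable Y)
    (hX : ∀ j : ℕ, P {ω | X ω = (j : ℤ) + 1} = ENNReal.ofReal ((1 - p) ^ j * p))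
    (hY : ∀ j : ℕ, P {ω | Y ω = (j : ℤ) + 1} = ENNReal.ofReal ((1 - p) ^ j * p))
    (hXpos : ∀ᵐ ω ∂P, 1 ≤ X ω) (hYpos : ∀ᵐ ω ∂P, 1 ≤ Y ω)
    (hind : IndepFun X Y P) (m : ℕ) :
    P {ω | X ω - Y ω = m} = ENNReal.ofReal (p / (2 - p) * (1 - p) ^ m) := by
  set A : ℕ → Set Ω := fun j => {ω | X ω = ((m + j : ℕ) : ℤ) + 1} ∩ {ω | Y ω = (j : ℤ) + 1}
  have hA : {ω | X ω - Y ω = m} =ᵐ[P] ⋃ j, A j := by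
    rw [Filter.eventuallyEq_set]
    filter_upwards [hXpos, hYpos] with ω hx hy
    simp only [A, Set.mem_ofPred_eq, Set.mem_iUnion, Set.mem_inter_iff]
    exact ⟨fun h => ⟨(Y ω - 1).toNat, by omega, by omega⟩, fun ⟨j, h1, h2⟩ => by omega⟩
  have hAdisj : Pairwise (Function.onFun Disjoint A) := fun i j hij =>
    Set.disjoint_left.2 fun ω ⟨_, h1⟩ ⟨_, h2⟩ => hij (by simp_all)
  have hAmeas (j : ℕ) : MeasurableSet (A j) :=
    (hXm (measurableSet_singleton _)).inter (hYm (measurableSet_singleton _))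
  have hq : 0 ≤ 1 - p := by linarith
  have hq2 : (1 - p) ^ 2 < 1 := by nlinarith
  have hAval (j : ℕ) : P (A j) = ENNReal.ofReal (p ^ 2 * (1 - p) ^ m * ((1 - p) ^ 2) ^ j) := by
    have hXY := hind.measure_inter_preimage_eq_mul _ _
      (measurableSet_singleton (((m + j : ℕ) : ℤ) + 1)) (measurableSet_singleton ((j : ℤ) + 1))
    simp only [Set.preimage, Set.mem_singleton_iff] at hXY
    rw [hXY, hX, hY, ← ENNReal.ofReal_mul (by positivity)]
    congr 1
    rw [← pow_mul, pow_add, pow_mul']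
    ring
  have hsum : HasSum (fun j => p ^ 2 * (1 - p) ^ m * ((1 - p) ^ 2) ^ j)
      (p / (2 - p) * (1 - p) ^ m) := by
    have h2p : 2 - p ≠ 0 := by linarith
    have hsq : 1 - (1 - p) ^ 2 = p * (2 - p) := by ring
    rw [show p / (2 - p) * (1 - p) ^ m = p ^ 2 * (1 - p) ^ m * (1 - (1 - p) ^ 2)⁻¹ by
      rw [hsq]; field_simp]
    exact (hasSum_geometric_of_lt_one (by positivity) hq2).mul_left _
  rw [measure_congr hA, measure_iUnion hAdisj hAmeas]
  simp_rw [hAval]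
  rw [← ENNReal.ofReal_tsum_of_nonneg (fun j => by positivity) hsum.summable, hsum.tsum_eq]

lemma measureReal_sub_eq_of_geometric {p : ℝ} (hp : 0 < p) (hp1 : p < 1)
    {X Y : Ω → ℤ} (hXm : Measurable X) (hYm : Measurable Y)
    (hX : ∀ j : ℕ, P {ω | X ω = (j : ℤ) + 1} = ENNReal.ofReal ((1 - p) ^ j * p))
    (hY : ∀ j : ℕ, P {ω | Y ω = (j : ℤ) + 1} = ENNReal.ofReal ((1 - p) ^ j * p))
    (hXpos : ∀ᵐ ω ∂P, 1 ≤ X ω) (hYpos : ∀ᵐ ω ∂P, 1 ≤ Y ω)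
    (hind : IndepFun X Y P) (z : ℤ) :
    P.real {ω | X ω - Y ω = z} = p / (2 - p) * (1 - p) ^ z.natAbs := by
  have hnonneg (n : ℕ) : 0 ≤ p / (2 - p) * (1 - p) ^ n := by
    have : 0 ≤ 1 - p := by linarith
    have : 0 < 2 - p := by linarith
    positivity
  rcases Int.eq_nat_or_neg z with ⟨n, rfl | rfl⟩
  · rw [measureReal_def, measure_sub_eq_natCast_of_geometric hp hp1 hXm hYm hX hY hXpos hYpos
      hind, ENNReal.toReal_ofReal (hnonneg n), Int.natAbs_natCast]
  · have hswap : {ω | X ω - Y ω = -n} = {ω | Y ω - X ω = n} := by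
      ext ω
      simp only [Set.mem_ofPred_eq]
      omega
    rw [hswap, measureReal_def, measure_sub_eq_natCast_of_geometric hp hp1 hYm hXm hY hX hYpos
      hXpos hind.symm, ENNReal.toReal_ofReal (hnonneg n), Int.natAbs_neg, Int.natAbs_natCast]

lemma measureReal_roundToOdd_eq [IsProbabilityMeasure P] {Z : Ω → ℤ} {ξ : Ω → Bool}
    (hZ : Measurable Z) (hξm : Measurable ξ) (hξ : P.real {ω | ξ ω = true} = 1 / 2)
    (hind : IndepFun Z ξ P) {n : ℤ} (hn : Odd n) :
    P.real {ω | roundToOdd (Z ω) (ξ ω) = n} =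
      P.real {ω | Z ω = n} + P.real {ω | Z ω = n + 1} / 2 + P.real {ω | Z ω = n - 1} / 2 := by
  have hfair (b : Bool) : P.real {ω | ξ ω = b} = 1 / 2 := by
    cases b
    · have hcompl : {ω | ξ ω = false} = {ω | ξ ω = true}ᶜ := by ext; simp
      rw [hcompl, measureReal_compl (s := {ω | ξ ω = true}) (hξm (measurableSet_singleton _)),
        probReal_univ, hξ]
      norm_num
    · exact hξ
  have hZξ (m : ℤ) (b : Bool) :
      P.real ({ω | Z ω = m} ∩ {ω | ξ ω = b}) = P.real {ω | Z ω = m} / 2 := by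
    have h := hind.measureReal_inter_preimage_eq_mul (measurableSet_singleton m)
      (measurableSet_singleton b)
    simp only [Set.preimage, Set.mem_singleton_iff] at h
    rw [h, hfair]
    ring
  have hset : {ω | roundToOdd (Z ω) (ξ ω) = n} = {ω | Z ω = n} ∪
      ({ω | Z ω = n + 1} ∩ {ω | ξ ω = true}) ∪ ({ω | Z ω = n - 1} ∩ {ω | ξ ω = false}) := by
    ext ω
    simp only [Set.mem_ofPred_eq, Set.mem_union, Set.mem_inter_iff, roundToOdd_eq_iff hn,
      or_assoc]
  have hmeas (m : ℤ) (b : Bool) : MeasurableSet ({ω | Z ω = m} ∩ {ω | ξ ω = b}) :=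
    (hZ (measurableSet_singleton m)).inter (hξm (measurableSet_singleton b))
  rw [hset, measureReal_union _ (hmeas _ _), measureReal_union _ (hmeas _ _), hZξ, hZξ]
  · exact Set.disjoint_left.2 fun ω h h' => by simp_all
  · refine Set.disjoint_left.2 fun ω h h' => ?_
    simp only [Set.mem_union, Set.mem_inter_iff, Set.mem_ofPred_eq] at h h'
    omega

end

/-- Let `Z = X − Y` with `X, Y` independent Geometric(p) on `{1,2,...}` and let `W = Z` if `Z`
is odd, and `W = Z ± 1` with probability 1/2 each (independent fair tiebreaker `ξ`) if `Z` is
even.  Then for every `k ≥ 0`,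
`P(|W| + 1 = 2(k+1)) = (1−p)^{2k}(1 − (1−p)²)`, i.e. `(|W|+1)/2` is
Geometric(1−(1−p)²). -/
theorem stmt1 {Ω : Type*} [MeasurableSpace Ω] (P : Measure Ω) [IsProbabilityMeasure P]
    (p : ℝ) (hp : 0 < p) (hp1 : p < 1)
    (X Y : Ω → ℤ) (hXm : Measurable X) (hYm : Measurable Y)
    (hX : ∀ j : ℕ, P {ω | X ω = (j : ℤ) + 1} = ENNReal.ofReal ((1 - p) ^ j * p))
    (hY : ∀ j : ℕ, P {ω | Y ω = (j : ℤ) + 1} = ENNReal.ofReal ((1 - p) ^ j * p))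
    (hXpos : ∀ᵐ ω ∂P, 1 ≤ X ω) (hYpos : ∀ᵐ ω ∂P, 1 ≤ Y ω)
    (hindepXY : IndepFun X Y P)
    (ξ : Ω → Bool) (hξm : Measurable ξ)
    (hξ : P {ω | ξ ω = true} = 1 / 2)
    (hindepξ : IndepFun (fun ω => (X ω, Y ω)) ξ P)
    (W : Ω → ℤ)
    (hW : ∀ ω, W ω =
      if Odd (X ω - Y ω) then X ω - Y ω
      else if ξ ω then X ω - Y ω - 1 else X ω - Y ω + 1) :
    ∀ k : ℕ,
      P {ω | |W ω| + 1 = 2 * ((k : ℤ) + 1)} =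
        ENNReal.ofReal ((1 - p) ^ (2 * k) * (1 - (1 - p) ^ 2)) := by
  intro k
  have hZ := measureReal_sub_eq_of_geometric hp hp1 hXm hYm hX hY hXpos hYpos hindepXY
  have hWodd {n : ℤ} (hn : Odd n) :=
    measureReal_roundToOdd_eq (P := P) (Z := fun ω => X ω - Y ω) (hXm.sub hYm) hξm
      (by simp [measureReal_def, hξ]) (hindepξ.comp (measurable_fst.sub measurable_snd)
        measurable_id) hn
  have hWround : ∀ ω, W ω = roundToOdd (X ω - Y ω) (ξ ω) := hW
  have hset : {ω | |W ω| + 1 = 2 * ((k : ℤ) + 1)} =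
      {ω | roundToOdd (X ω - Y ω) (ξ ω) = 2 * k + 1} ∪
        {ω | roundToOdd (X ω - Y ω) (ξ ω) = -(2 * k + 1)} := by
    ext ω
    simp only [Set.mem_ofPred_eq, Set.mem_union, ← hWround, Int.abs_eq_natAbs]
    omega
  have hodd : Odd (2 * (k : ℤ) + 1) := odd_two_mul_add_one _
  rw [← ofReal_measureReal, hset, measureReal_union, hWodd hodd, hWodd hodd.neg]
  · congr 1
    simp only [hZ]
    rw [show (2 * (k : ℤ) + 1).natAbs = 2 * k + 1 by omega,
      show (2 * (k : ℤ) + 1 + 1).natAbs = 2 * k + 2 by omega,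
      show (2 * (k : ℤ) + 1 - 1).natAbs = 2 * k by omega,
      show (-(2 * (k : ℤ) + 1)).natAbs = 2 * k + 1 by omega,
      show (-(2 * (k : ℤ) + 1) + 1).natAbs = 2 * k by omega,
      show (-(2 * (k : ℤ) + 1) - 1).natAbs = 2 * k + 2 by omega]
    have : 2 - p ≠ 0 := by linarith
    field_simp
    ring
  · exact Set.disjoint_left.2 fun ω h h' => by simp_all; omega
  · exact (hXm.sub hYm).prodMk hξm (MeasurableSet.of_discrete
      (s := {q : ℤ × Bool | roundToOdd q.1 q.2 = -(2 * k + 1)}))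
end

section
/- With W as above (the odd-ized difference of two independent Geometric(p) variables with fair tiebreaker on even values), E[W] = 0 and Var(W) = E[W²] = (p⁴ + (2−p)⁴)/(2 p² (2−p)²). -/
open MeasureTheory ProbabilityTheory
open scoped ENNReal NNReal

section helpers
variable {p : ℝ}

lemma hnq (hp : 0 < p) (hp1 : p < 1) : ‖1 - p‖ < 1 := by
  rw [Real.norm_eq_abs, abs_of_nonneg (by linarith)]; linarith

lemma sumA (hp : 0 < p) (hp1 : p < 1) :
    HasSum (fun j : ℕ => (((j : ℤ) + 1 : ℤ) : ℝ) * ((1 - p) ^ j * p)) (1 / p) := by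
  have h := (hasSum_choose_mul_geometric_of_norm_lt_one 1 (hnq hp hp1)).mul_right p
  have h2 : (fun n : ℕ => (((n + 1).choose 1 : ℕ) : ℝ) * (1 - p) ^ n * p)
      = fun j : ℕ => (((j : ℤ) + 1 : ℤ) : ℝ) * ((1 - p) ^ j * p) := by
    funext n; rw [Nat.choose_one_right]; push_cast; ring
  rw [h2] at h
  convert h using 1
  · rfl
  have hps : (1 : ℝ) - (1 - p) = p := by ring
  rw [hps]
  field_simp

lemma choose2 (n : ℕ) : 2 * ((n + 2).choose 2) = (n + 1) * (n + 2) := by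
  have h1 : n + 2 - 1 = n + 1 := rfl
  have h : 2 ∣ (n + 2) * (n + 1) := by
    have := (Nat.even_mul_succ_self (n + 1)).two_dvd
    simpa [Nat.mul_comm] using this
  rw [Nat.choose_two_right, h1, Nat.mul_div_cancel' h]
  ring

lemma sumB (hp : 0 < p) (hp1 : p < 1) :
    HasSum (fun j : ℕ => ((((j : ℤ) + 1 : ℤ) : ℝ)) ^ 2 * ((1 - p) ^ j * p))
      ((2 - p) / p ^ 2) := by
  have h2 := ((hasSum_choose_mul_geometric_of_norm_lt_one 2 (hnq hp hp1)).mul_left 2).mul_right p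
  have h1 := (hasSum_choose_mul_geometric_of_norm_lt_one 1 (hnq hp hp1)).mul_right p
  have h := h2.sub h1
  have heq : (fun b : ℕ => 2 * ((((b + 2).choose 2 : ℕ) : ℝ) * (1 - p) ^ b) * p
      - (((b + 1).choose 1 : ℕ) : ℝ) * (1 - p) ^ b * p)
      = fun j : ℕ => ((((j : ℤ) + 1 : ℤ) : ℝ)) ^ 2 * ((1 - p) ^ j * p) := by
    funext n
    have hc : (((n + 2).choose 2 : ℕ) : ℝ) = ((n : ℝ) + 1) * ((n : ℝ) + 2) / 2 := by
      have h0 := congrArg (Nat.cast (R := ℝ)) (choose2 n)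
      push_cast at h0
      linarith
    rw [hc, Nat.choose_one_right]
    push_cast
    ring
  rw [heq] at h
  convert h using 1
  · rfl
  have hps : (1 : ℝ) - (1 - p) = p := by ring
  rw [hps]
  field_simp
  ring

lemma sumC (hp : 0 < p) (hp1 : p < 1) :
    HasSum (fun j : ℕ => ((-1 : ℝ) ^ ((j : ℤ) + 1)) * ((1 - p) ^ j * p))
      (-(p / (2 - p))) := by
  have hr : ‖-(1 - p)‖ < 1 := by rw [norm_neg]; exact hnq hp hp1
  have h := ((hasSum_geometric_of_norm_lt_one hr).mul_right p).neg
  have heq : (fun n : ℕ => -((-(1 - p)) ^ n * p))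
      = fun j : ℕ => ((-1 : ℝ) ^ ((j : ℤ) + 1)) * ((1 - p) ^ j * p) := by
    funext n
    have : ((-1 : ℝ) ^ ((n : ℤ) + 1)) = -(-1 : ℝ) ^ n := by
      rw [show (n : ℤ) + 1 = ((n + 1 : ℕ) : ℤ) by push_cast; ring, zpow_natCast, pow_succ]
      ring
    rw [this, neg_pow]
    ring
  rw [heq] at h
  convert h using 1
  · rfl
  rw [sub_neg_eq_add]
  have h22 : (1 : ℝ) + (1 - p) = 2 - p := by ring
  rw [h22, div_eq_mul_inv]
  ring

lemma geom_moment {Ω : Type*} [MeasurableSpace Ω] (P : Measure Ω) [IsProbabilityMeasure P]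
    (hp : 0 < p) (hp1 : p < 1) (X : Ω → ℤ) (hXm : Measurable X)
    (hX : ∀ j : ℕ, P {ω | X ω = (j : ℤ) + 1} = ENNReal.ofReal ((1 - p) ^ j * p))
    (hXpos : ∀ᵐ ω ∂P, 1 ≤ X ω)
    (g : ℤ → ℝ) {S : ℝ}
    (hnorm : Summable fun j : ℕ => ‖g ((j : ℤ) + 1)‖ * ((1 - p) ^ j * p))
    (hS : HasSum (fun j : ℕ => g ((j : ℤ) + 1) * ((1 - p) ^ j * p)) S) :
    Integrable (fun ω => g (X ω)) P ∧ ∫ ω, g (X ω) ∂P = S := by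
  have hq0 : (0:ℝ) ≤ 1 - p := by linarith
  have hw : ∀ j : ℕ, 0 ≤ (1 - p) ^ j * p := fun j => mul_nonneg (pow_nonneg hq0 j) hp.le
  set e : ℕ → ℤ := fun j => (j : ℤ) + 1 with he_def
  have he_inj : Function.Injective e := by intro a b h; simpa [he_def] using h
  have hμ : ∀ j : ℕ, P.map X {(j : ℤ) + 1} = ENNReal.ofReal ((1 - p) ^ j * p) := by
    intro j
    rw [Measure.map_apply hXm (measurableSet_singleton _)]
    rw [show X ⁻¹' {(j : ℤ) + 1} = {ω | X ω = (j : ℤ) + 1} from rfl]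
    exact hX j
  have hμ0 : ∀ z : ℤ, z ∉ Set.range e → P.map X {z} = 0 := by
    intro z hz
    have hz1 : z < 1 := by
      by_contra h
      exact hz ⟨(z - 1).toNat, by simp [he_def]; omega⟩
    rw [Measure.map_apply hXm (measurableSet_singleton _)]
    refine measure_mono_null ?_ (ae_iff.mp hXpos)
    intro ω hω
    simp only [Set.mem_preimage, Set.mem_singleton_iff] at hω
    simp only [Set.mem_setOf_eq, hω]
    omega
  have hgm : Measurable g := measurable_of_countable g
  have hInt : Integrable g (P.map X) := by
    refine ⟨hgm.aestronglyMeasurable, ?_⟩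
    rw [HasFiniteIntegral, lintegral_countable']
    have hsupp : (Function.support fun z : ℤ => ‖g z‖ₑ * P.map X {z}) ⊆ Set.range e := by
      intro z hz
      by_contra h
      exact hz (by simp [hμ0 z h])
    rw [← he_inj.tsum_eq hsupp]
    have : ∀ j : ℕ, ‖g (e j)‖ₑ * P.map X {e j}
        = ENNReal.ofReal (‖g ((j : ℤ) + 1)‖ * ((1 - p) ^ j * p)) := by
      intro j
      rw [show P.map X {e j} = ENNReal.ofReal ((1 - p) ^ j * p) from hμ j,
        ENNReal.ofReal_mul (norm_nonneg _), ofReal_norm]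
    rw [tsum_congr this, ← ENNReal.ofReal_tsum_of_nonneg
      (fun j => mul_nonneg (norm_nonneg _) (hw j)) hnorm]
    exact ENNReal.ofReal_lt_top
  have hInt' : Integrable (fun ω => g (X ω)) P :=
    (integrable_map_measure hgm.aestronglyMeasurable hXm.aemeasurable).mp hInt
  refine ⟨hInt', ?_⟩
  have h1 : ∫ ω, g (X ω) ∂P = ∫ z, g z ∂(P.map X) :=
    (integral_map hXm.aemeasurable hgm.aestronglyMeasurable).symm
  rw [h1, integral_countable' hInt]
  have hsupp2 : (Function.support fun z : ℤ => (P.map X).real {z} • g z) ⊆ Set.range e := by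
    intro z hz
    by_contra h
    exact hz (by simp [Measure.real, hμ0 z h])
  rw [← he_inj.tsum_eq hsupp2]
  rw [tsum_congr (fun j : ℕ => by
    rw [Measure.real, show P.map X {e j} = ENNReal.ofReal ((1 - p) ^ j * p) from hμ j,
      ENNReal.toReal_ofReal (hw j), smul_eq_mul, mul_comm])]
  exact hS.tsum_eq

end helpers

/-- indicator of even integers, as a real number -/
def efun (z : ℤ) : ℝ := if Even z then 1 else 0

/-- With `W` the odd-ized difference of two independent Geometric(p) variables (fair tiebreaker
on even values), `E[W] = 0` and `Var(W) = E[W²] = (p⁴ + (2−p)⁴)/(2 p² (2−p)²)`. -/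
theorem stmt2 {Ω : Type*} [MeasurableSpace Ω] (P : Measure Ω) [IsProbabilityMeasure P]
    (p : ℝ) (hp : 0 < p) (hp1 : p < 1)
    (X Y : Ω → ℤ) (hXm : Measurable X) (hYm : Measurable Y)
    (hX : ∀ j : ℕ, P {ω | X ω = (j : ℤ) + 1} = ENNReal.ofReal ((1 - p) ^ j * p))
    (hY : ∀ j : ℕ, P {ω | Y ω = (j : ℤ) + 1} = ENNReal.ofReal ((1 - p) ^ j * p))
    (hXpos : ∀ᵐ ω ∂P, 1 ≤ X ω) (hYpos : ∀ᵐ ω ∂P, 1 ≤ Y ω)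
    (hindepXY : IndepFun X Y P)
    (ξ : Ω → Bool) (hξm : Measurable ξ)
    (hξ : P {ω | ξ ω = true} = 1 / 2)
    (hindepξ : IndepFun (fun ω => (X ω, Y ω)) ξ P)
    (W : Ω → ℤ)
    (hW : ∀ ω, W ω =
      if Odd (X ω - Y ω) then X ω - Y ω
      else if ξ ω then X ω - Y ω - 1 else X ω - Y ω + 1) :
    (∫ ω, (W ω : ℝ) ∂P) = 0 ∧
    (∫ ω, ((W ω : ℝ)) ^ 2 ∂P) = (p ^ 4 + (2 - p) ^ 4) / (2 * p ^ 2 * (2 - p) ^ 2) := by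
  have hp0 : p ≠ 0 := ne_of_gt hp
  have h2p : (2 : ℝ) - p ≠ 0 := by linarith
  have hq0 : (0:ℝ) ≤ 1 - p := by linarith
  have hq1 : (1:ℝ) - p < 1 := by linarith
  -- first moments
  obtain ⟨hIX, hEX⟩ := geom_moment P hp hp1 X hXm hX hXpos (fun z : ℤ => (z : ℝ))
    (((sumA hp hp1).summable).congr (fun j => by
      rw [Real.norm_of_nonneg (by push_cast; positivity)]))
    (sumA hp hp1)
  obtain ⟨hIY, hEY⟩ := geom_moment P hp hp1 Y hYm hY hYpos (fun z : ℤ => (z : ℝ))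
    (((sumA hp hp1).summable).congr (fun j => by
      rw [Real.norm_of_nonneg (by push_cast; positivity)]))
    (sumA hp hp1)
  -- second moments
  obtain ⟨hIX2, hEX2⟩ := geom_moment P hp hp1 X hXm hX hXpos (fun z : ℤ => ((z : ℝ)) ^ 2)
    (((sumB hp hp1).summable).congr (fun j => by
      rw [Real.norm_of_nonneg (sq_nonneg _)]))
    (sumB hp hp1)
  obtain ⟨hIY2, hEY2⟩ := geom_moment P hp hp1 Y hYm hY hYpos (fun z : ℤ => ((z : ℝ)) ^ 2)
    (((sumB hp hp1).summable).congr (fun j => by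
      rw [Real.norm_of_nonneg (sq_nonneg _)]))
    (sumB hp hp1)
  -- sign moments
  have hnormC : Summable fun j : ℕ => ‖(-1 : ℝ) ^ ((j : ℤ) + 1)‖ * ((1 - p) ^ j * p) := by
    refine ((summable_geometric_of_lt_one hq0 hq1).mul_right p).congr fun j => ?_
    rw [norm_zpow, norm_neg, norm_one, one_zpow, one_mul]
  obtain ⟨hIsX, hEsX⟩ := geom_moment P hp hp1 X hXm hX hXpos (fun z : ℤ => (-1 : ℝ) ^ z)
    hnormC (sumC hp hp1)
  obtain ⟨hIsY, hEsY⟩ := geom_moment P hp hp1 Y hYm hY hYpos (fun z : ℤ => (-1 : ℝ) ^ z)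
    hnormC (sumC hp hp1)
  -- products via independence of X and Y
  have hindXY' : IndepFun (fun ω => ((X ω : ℤ) : ℝ)) (fun ω => ((Y ω : ℤ) : ℝ)) P :=
    hindepXY.comp (measurable_of_countable _) (measurable_of_countable _)
  have hIXY : Integrable (fun ω => ((X ω : ℤ) : ℝ) * ((Y ω : ℤ) : ℝ)) P := by
    have := hindXY'.integrable_mul hIX hIY
    simpa [Pi.mul_def] using this
  have hEXY : ∫ ω, ((X ω : ℤ) : ℝ) * ((Y ω : ℤ) : ℝ) ∂P = (1 / p) * (1 / p) := by
    have h := hindXY'.integral_mul_eq_mul_integral hIX.1 hIY.1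
    simp only [Pi.mul_def] at h
    rw [h, hEX, hEY]
  have hindsXY : IndepFun (fun ω => (-1 : ℝ) ^ (X ω)) (fun ω => (-1 : ℝ) ^ (Y ω)) P :=
    hindepXY.comp (measurable_of_countable _) (measurable_of_countable _)
  have hIsXsY : Integrable (fun ω => (-1 : ℝ) ^ (X ω) * (-1 : ℝ) ^ (Y ω)) P := by
    have := hindsXY.integrable_mul hIsX hIsY
    simpa [Pi.mul_def] using this
  have hEsXsY : ∫ ω, (-1 : ℝ) ^ (X ω) * (-1 : ℝ) ^ (Y ω) ∂P
      = (-(p / (2 - p))) * (-(p / (2 - p))) := by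
    have h := hindsXY.integral_mul_eq_mul_integral hIsX.1 hIsY.1
    simp only [Pi.mul_def] at h
    rw [h, hEsX, hEsY]
  -- epsilon
  set ε : Ω → ℝ := fun ω => if ξ ω = true then 1 else -1 with hε_def
  have hmε : Measurable ε := (measurable_of_countable (fun b : Bool => if b = true then (1:ℝ) else -1)).comp hξm
  have hIε : Integrable ε P := by
    refine (integrable_const (1:ℝ)).mono' hmε.aestronglyMeasurable (ae_of_all _ fun ω => ?_)
    by_cases h : ξ ω = true <;> simp [hε_def, h]
  have hEε : ∫ ω, ε ω ∂P = 0 := by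
    have hset : MeasurableSet {ω | ξ ω = true} := hξm (measurableSet_singleton true)
    have h1 : ε = fun ω =>
        2 * Set.indicator {ω | ξ ω = true} (fun _ => (1:ℝ)) ω - 1 := by
      funext ω
      by_cases h : ξ ω = true
      · simp only [hε_def, h, if_true,
          Set.indicator_of_mem (show ω ∈ {ω | ξ ω = true} from h)]
        norm_num
      · simp [hε_def, h, Set.indicator_of_notMem (show ω ∉ {ω | ξ ω = true} from h)]
    rw [h1, integral_sub (((integrable_const (1:ℝ)).indicator hset).const_mul 2)
      (integrable_const 1)]
    rw [integral_const_mul, integral_indicator_const (1:ℝ) hset, Measure.real, hξ]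
    simp
  -- independence of functions of (X, Y) from ε
  have hindF : ∀ F : ℤ × ℤ → ℝ, IndepFun (fun ω => F (X ω, Y ω)) ε P := fun F =>
    hindepξ.comp (measurable_of_countable F)
      (measurable_of_countable (fun b : Bool => if b = true then (1:ℝ) else -1))
  have hindε_e : IndepFun ε (fun ω => efun (X ω - Y ω)) P :=
    (hindF (fun q => efun (q.1 - q.2))).symm
  have hindε_Ze : IndepFun ε (fun ω => ((X ω - Y ω : ℤ) : ℝ) * efun (X ω - Y ω)) P :=
    (hindF (fun q => ((q.1 - q.2 : ℤ) : ℝ) * efun (q.1 - q.2))).symm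
  -- integrability of e(Z) and Z * e(Z)
  have hmeasZ : Measurable (fun ω => X ω - Y ω) := hXm.sub hYm
  have hme : Measurable (fun ω => efun (X ω - Y ω)) :=
    (measurable_of_countable efun).comp hmeasZ
  have hIe : Integrable (fun ω => efun (X ω - Y ω)) P := by
    refine (integrable_const (1:ℝ)).mono' hme.aestronglyMeasurable (ae_of_all _ fun ω => ?_)
    by_cases h : Even (X ω - Y ω) <;> simp [efun, h]
  have hIZ : Integrable (fun ω => ((X ω - Y ω : ℤ) : ℝ)) P := by
    have hcast : (fun ω => ((X ω - Y ω : ℤ) : ℝ))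
        = fun ω => ((X ω : ℤ) : ℝ) - ((Y ω : ℤ) : ℝ) := by
      funext ω; push_cast; ring
    rw [hcast]; exact hIX.sub hIY
  have hmZe : Measurable (fun ω => ((X ω - Y ω : ℤ) : ℝ) * efun (X ω - Y ω)) :=
    ((measurable_of_countable (fun z : ℤ => ((z : ℝ)) * efun z)).comp hmeasZ)
  have hIZe : Integrable (fun ω => ((X ω - Y ω : ℤ) : ℝ) * efun (X ω - Y ω)) P := by
    refine hIZ.abs.mono' hmZe.aestronglyMeasurable (ae_of_all _ fun ω => ?_)
    rw [norm_mul]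
    by_cases h : Even (X ω - Y ω) <;>
      simp [efun, h, Real.norm_eq_abs, abs_nonneg]
  -- products with ε
  have hIεe : Integrable (fun ω => ε ω * efun (X ω - Y ω)) P :=
    hIe.bdd_mul (c := 1) hmε.aestronglyMeasurable (ae_of_all _ fun ω => by
      by_cases h : ξ ω = true <;> simp [hε_def, h])
  have hIεZe : Integrable (fun ω => ε ω * (((X ω - Y ω : ℤ) : ℝ) * efun (X ω - Y ω))) P :=
    hIZe.bdd_mul (c := 1) hmε.aestronglyMeasurable (ae_of_all _ fun ω => by
      by_cases h : ξ ω = true <;> simp [hε_def, h])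
  have hEεe : ∫ ω, ε ω * efun (X ω - Y ω) ∂P = 0 := by
    have h := hindε_e.integral_mul_eq_mul_integral hIε.1 hIe.1
    simp only [Pi.mul_def] at h
    rw [h, hEε, zero_mul]
  have hEεZe : ∫ ω, ε ω * (((X ω - Y ω : ℤ) : ℝ) * efun (X ω - Y ω)) ∂P = 0 := by
    have h := hindε_Ze.integral_mul_eq_mul_integral hIε.1 hIZe.1
    simp only [Pi.mul_def] at h
    rw [h, hEε, zero_mul]
  -- pointwise identities
  have hW1 : ∀ ω, ((W ω : ℤ) : ℝ)
      = ((X ω - Y ω : ℤ) : ℝ) - ε ω * efun (X ω - Y ω) := by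
    intro ω
    rw [hW ω]
    by_cases h : Odd (X ω - Y ω)
    · rw [if_pos h]
      simp [efun, Int.not_even_iff_odd.mpr h]
    · have hev : Even (X ω - Y ω) := Int.not_odd_iff_even.mp h
      rw [if_neg h]
      by_cases hb : ξ ω = true
      · simp only [hb, if_true, hε_def, efun, if_pos hev]
        push_cast; ring
      · simp only [hb, if_false, hε_def, efun, if_pos hev]
        push_cast; ring
  have hW2 : ∀ ω, (((W ω : ℤ) : ℝ)) ^ 2
      = ((X ω - Y ω : ℤ) : ℝ) ^ 2
        - 2 * (ε ω * (((X ω - Y ω : ℤ) : ℝ) * efun (X ω - Y ω)))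
        + efun (X ω - Y ω) := by
    intro ω
    rw [hW ω]
    by_cases h : Odd (X ω - Y ω)
    · rw [if_pos h]
      simp [efun, Int.not_even_iff_odd.mpr h]
    · have hev : Even (X ω - Y ω) := Int.not_odd_iff_even.mp h
      rw [if_neg h]
      by_cases hb : ξ ω = true
      · simp only [hb, if_true, hε_def, efun, if_pos hev]
        push_cast; ring
      · simp only [hb, if_false, hε_def, efun, if_pos hev]
        push_cast; ring
  -- e(Z) in terms of signs
  have he_eq : ∀ ω, efun (X ω - Y ω)
      = (1 + (-1 : ℝ) ^ (X ω) * (-1 : ℝ) ^ (Y ω)) / 2 := by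
    intro ω
    have hinv : ((-1 : ℝ) ^ (Y ω))⁻¹ = (-1 : ℝ) ^ (Y ω) := by
      rcases Int.even_or_odd (Y ω) with h | h
      · rw [h.neg_one_zpow]; norm_num
      · rw [h.neg_one_zpow]; norm_num
    have hzpow : (-1 : ℝ) ^ (X ω - Y ω) = (-1 : ℝ) ^ (X ω) * (-1 : ℝ) ^ (Y ω) := by
      rw [zpow_sub₀ (by norm_num : (-1:ℝ) ≠ 0), div_eq_mul_inv, hinv]
    rcases Int.even_or_odd (X ω - Y ω) with h | h
    · rw [show efun (X ω - Y ω) = 1 from if_pos h, ← hzpow, h.neg_one_zpow]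
      norm_num
    · rw [show efun (X ω - Y ω) = 0 from if_neg (Int.not_even_iff_odd.mpr h), ← hzpow,
        h.neg_one_zpow]
      norm_num
  -- E[e(Z)]
  have hIsprod : Integrable (fun ω => (1 + (-1 : ℝ) ^ (X ω) * (-1 : ℝ) ^ (Y ω)) / 2) P := by
    have : (fun ω => (1 + (-1 : ℝ) ^ (X ω) * (-1 : ℝ) ^ (Y ω)) / 2)
        = fun ω => (1 / 2 : ℝ) + ((-1 : ℝ) ^ (X ω) * (-1 : ℝ) ^ (Y ω)) * (1/2) := by
      funext ω; ring
    rw [this]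
    exact (integrable_const _).add (hIsXsY.mul_const _)
  have hEe : ∫ ω, efun (X ω - Y ω) ∂P = (1 + (p / (2 - p)) ^ 2) / 2 := by
    rw [integral_congr_ae (Filter.Eventually.of_forall he_eq)]
    have hsplit : (fun ω => (1 + (-1 : ℝ) ^ (X ω) * (-1 : ℝ) ^ (Y ω)) / 2)
        = fun ω => (1 / 2 : ℝ) + ((-1 : ℝ) ^ (X ω) * (-1 : ℝ) ^ (Y ω)) * (1/2) := by
      funext ω; ring
    rw [hsplit, integral_add (integrable_const _) (hIsXsY.mul_const _),
      integral_const, integral_mul_const, hEsXsY]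
    simp [measure_univ]
    ring
  -- E[Z] and E[Z^2]
  have hEZ : ∫ ω, ((X ω - Y ω : ℤ) : ℝ) ∂P = 0 := by
    have hcast : (fun ω => ((X ω - Y ω : ℤ) : ℝ))
        = fun ω => ((X ω : ℤ) : ℝ) - ((Y ω : ℤ) : ℝ) := by
      funext ω; push_cast; ring
    rw [hcast, integral_sub hIX hIY, hEX, hEY, sub_self]
  have hIZ2 : Integrable (fun ω => ((X ω - Y ω : ℤ) : ℝ) ^ 2) P := by
    have hcast : (fun ω => ((X ω - Y ω : ℤ) : ℝ) ^ 2)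
        = fun ω => ((X ω : ℤ) : ℝ) ^ 2 - 2 * (((X ω : ℤ) : ℝ) * ((Y ω : ℤ) : ℝ))
            + ((Y ω : ℤ) : ℝ) ^ 2 := by
      funext ω; push_cast; ring
    rw [hcast]
    exact (hIX2.sub (hIXY.const_mul 2)).add hIY2
  have hEZ2 : ∫ ω, ((X ω - Y ω : ℤ) : ℝ) ^ 2 ∂P
      = (2 - p) / p ^ 2 - 2 * ((1 / p) * (1 / p)) + (2 - p) / p ^ 2 := by
    have hcast : (fun ω => ((X ω - Y ω : ℤ) : ℝ) ^ 2)
        = fun ω => ((X ω : ℤ) : ℝ) ^ 2 - 2 * (((X ω : ℤ) : ℝ) * ((Y ω : ℤ) : ℝ))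
            + ((Y ω : ℤ) : ℝ) ^ 2 := by
      funext ω; push_cast; ring
    have hI1 : Integrable (fun ω => ((X ω : ℤ) : ℝ) ^ 2
        - 2 * (((X ω : ℤ) : ℝ) * ((Y ω : ℤ) : ℝ))) P := by
      simpa [Pi.sub_def] using hIX2.sub (hIXY.const_mul 2)
    rw [hcast, integral_add hI1 hIY2,
      integral_sub hIX2 (hIXY.const_mul 2), integral_const_mul, hEX2, hEXY, hEY2]
  constructor
  · rw [integral_congr_ae (Filter.Eventually.of_forall hW1),
      integral_sub hIZ hIεe, hEZ, hEεe, sub_zero]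
  · rw [integral_congr_ae (Filter.Eventually.of_forall hW2),
      integral_add (show Integrable (fun ω => ((X ω - Y ω : ℤ) : ℝ) ^ 2
        - 2 * (ε ω * (((X ω - Y ω : ℤ) : ℝ) * efun (X ω - Y ω)))) P by
          simpa [Pi.sub_def] using hIZ2.sub (hIεZe.const_mul 2)) hIe,
      integral_sub hIZ2 (hIεZe.const_mul 2), integral_const_mul, hEZ2, hEεZe, hEe]
    field_simp
    ring
end

section
/- Let X₁, X₂, Y₁, Y₂ be i.i.d. Exponential(λ) random variables with λ > 0, and set R := (X₁ + Y₁ − X₂ − Y₂)/2. Then R has density f(x) = λ(λ|x| + 1/2) e^{−2λ|x|} for x ∈ ℝ. -/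
open MeasureTheory ProbabilityTheory Set Filter
open scoped ENNReal

namespace Stmt4Aux

lemma map_add_withDensity (f g : ℝ → ℝ≥0∞) (hf : Measurable f) (hg : Measurable g) :
    Measure.map (fun p : ℝ × ℝ => p.1 + p.2)
      ((volume.withDensity f).prod (volume.withDensity g)) =
      volume.withDensity (fun x => ∫⁻ t, f t * g (x - t)) := by
  have hadd : Measurable fun p : ℝ × ℝ => p.1 + p.2 := measurable_fst.add measurable_snd
  ext s hs
  rw [Measure.map_apply hadd hs, Measure.prod_apply (hadd hs), withDensity_apply _ hs]
  have key : ∀ x : ℝ, (volume.withDensity g) (Prod.mk x ⁻¹' ((fun p : ℝ × ℝ => p.1 + p.2) ⁻¹' s))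
      = ∫⁻ z, s.indicator 1 z * g (z - x) := by
    intro x
    have hpre : (Prod.mk x ⁻¹' ((fun p : ℝ × ℝ => p.1 + p.2) ⁻¹' s))
        = (fun y => x + y) ⁻¹' s := rfl
    rw [hpre, withDensity_apply _ (hs.preimage (measurable_const_add x))]
    have mp : MeasurePreserving (fun y : ℝ => x + y) volume volume :=
      measurePreserving_add_left volume x
    have emb : MeasurableEmbedding (fun y : ℝ => x + y) :=
      (MeasurableEquiv.addLeft x).measurableEmbedding
    calc ∫⁻ y in (fun y => x + y) ⁻¹' s, g y ∂volume
        = ∫⁻ z in s, g (z - x) ∂volume := by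
          have h := mp.setLIntegral_comp_preimage_emb emb (fun z => g (z - x)) s
          simpa using h
      _ = ∫⁻ z, s.indicator (fun z => g (z - x)) z ∂volume := (lintegral_indicator hs _).symm
      _ = ∫⁻ z, s.indicator 1 z * g (z - x) ∂volume := by
          congr 1; funext z
          by_cases hz : z ∈ s <;> simp [Set.indicator_apply, hz]
  simp_rw [key]
  have hmeas2 : Measurable fun p : ℝ × ℝ => s.indicator (1 : ℝ → ℝ≥0∞) p.2 * g (p.2 - p.1) :=
    ((measurable_one.indicator hs).comp measurable_snd).mul
      (hg.comp (measurable_snd.sub measurable_fst))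
  have hinner : Measurable fun x : ℝ => ∫⁻ z, s.indicator 1 z * g (z - x) ∂volume :=
    hmeas2.lintegral_prod_right'
  rw [lintegral_withDensity_eq_lintegral_mul volume hf hinner]
  have step1 : ∫⁻ x, (f * fun x : ℝ => ∫⁻ z, s.indicator 1 z * g (z - x) ∂volume) x ∂volume
      = ∫⁻ x, ∫⁻ z, f x * (s.indicator 1 z * g (z - x)) ∂volume ∂volume := by
    congr 1; funext x
    simp only [Pi.mul_apply]
    exact (lintegral_const_mul (f x)
      ((measurable_one.indicator hs).mul (hg.comp (measurable_id.sub_const x)))).symm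
  rw [step1, lintegral_lintegral_swap]
  · have step2 : ∀ z : ℝ, ∫⁻ x, f x * (s.indicator 1 z * g (z - x)) ∂volume
        = s.indicator 1 z * ∫⁻ x, f x * g (z - x) ∂volume := by
      intro z
      calc ∫⁻ x, f x * (s.indicator 1 z * g (z - x)) ∂volume
          = ∫⁻ x, s.indicator 1 z * (f x * g (z - x)) ∂volume := by
            congr 1; funext x; ring
        _ = s.indicator 1 z * ∫⁻ x, f x * g (z - x) ∂volume :=
            lintegral_const_mul _ (hf.mul (hg.comp (measurable_const.sub measurable_id)))
    simp_rw [step2]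
    have : ∀ z : ℝ, s.indicator 1 z * ∫⁻ x, f x * g (z - x) ∂volume
        = s.indicator (fun z => ∫⁻ x, f x * g (z - x) ∂volume) z := by
      intro z
      by_cases hz : z ∈ s <;> simp [Set.indicator_apply, hz]
    simp_rw [this]
    rw [lintegral_indicator hs]
  · exact ((hf.comp measurable_fst).mul hmeas2).aemeasurable


lemma map_neg_withDensity (g : ℝ → ℝ≥0∞) (hg : Measurable g) :
    Measure.map (fun x : ℝ => -x) (volume.withDensity g)
      = volume.withDensity (fun x => g (-x)) := by
  ext s hs
  rw [Measure.map_apply measurable_neg hs, withDensity_apply _ (hs.preimage measurable_neg),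
    withDensity_apply _ hs]
  have mp : MeasurePreserving (fun x : ℝ => -x) volume volume :=
    Measure.measurePreserving_neg volume
  have emb : MeasurableEmbedding (fun x : ℝ => -x) :=
    (MeasurableEquiv.neg ℝ).measurableEmbedding
  have h := mp.setLIntegral_comp_preimage_emb emb (fun z => g (-z)) s
  simpa using h

lemma map_div_two_withDensity (g : ℝ → ℝ≥0∞) (hg : Measurable g) :
    Measure.map (fun x : ℝ => x / 2) (volume.withDensity g)
      = volume.withDensity (fun x => ENNReal.ofReal 2 * g (2 * x)) := by
  have hdiv : Measurable fun x : ℝ => x / 2 := measurable_id.div_const 2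
  ext s hs
  rw [Measure.map_apply hdiv hs, withDensity_apply _ (hs.preimage hdiv), withDensity_apply _ hs]
  have hmap : Measure.map (fun x : ℝ => 2 * x) volume
      = ENNReal.ofReal |(2 : ℝ)⁻¹| • volume := Real.map_volume_mul_left two_ne_zero
  have hind : Measurable fun x : ℝ => ((fun x : ℝ => x / 2) ⁻¹' s).indicator g x :=
    hg.indicator (hs.preimage hdiv)
  calc ∫⁻ x in (fun x : ℝ => x / 2) ⁻¹' s, g x ∂volume
      = ∫⁻ x, ((fun x : ℝ => x / 2) ⁻¹' s).indicator g x ∂volume :=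
        (lintegral_indicator (hs.preimage hdiv) _).symm
    _ = ENNReal.ofReal 2 * ∫⁻ x, ((fun x : ℝ => x / 2) ⁻¹' s).indicator g x
          ∂(Measure.map (fun x : ℝ => 2 * x) volume) := by
        rw [hmap, lintegral_smul_measure, smul_eq_mul, ← mul_assoc, ← ENNReal.ofReal_mul (by norm_num)]
        norm_num [abs_of_nonneg]
    _ = ENNReal.ofReal 2 * ∫⁻ x, ((fun x : ℝ => x / 2) ⁻¹' s).indicator g (2 * x) ∂volume := by
        rw [lintegral_map hind (measurable_const_mul 2)]
    _ = ∫⁻ x, s.indicator (fun x => ENNReal.ofReal 2 * g (2 * x)) x ∂volume := by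
        rw [← lintegral_const_mul (ENNReal.ofReal 2)
          (f := fun x => ((fun x : ℝ => x / 2) ⁻¹' s).indicator g (2 * x))
          (hind.comp (measurable_const_mul 2))]
        congr 1; funext x
        have : (2 * x) / 2 = x := by ring
        by_cases hx : x ∈ s <;>
          simp [Set.indicator_apply, this, hx]
    _ = ∫⁻ x in s, ENNReal.ofReal 2 * g (2 * x) ∂volume := lintegral_indicator hs _


noncomputable def fexp (l : ℝ) : ℝ → ℝ≥0∞ :=
  fun x => ENNReal.ofReal (if 0 ≤ x then l * Real.exp (-l * x) else 0)

noncomputable def g2 (l : ℝ) : ℝ → ℝ≥0∞ :=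
  fun x => ENNReal.ofReal (if 0 ≤ x then l ^ 2 * x * Real.exp (-l * x) else 0)

noncomputable def densR (l : ℝ) : ℝ → ℝ :=
  fun x => l / 4 * (1 + l * |x|) * Real.exp (-l * |x|)

lemma fexp_measurable (l : ℝ) : Measurable (fexp l) := by
  unfold fexp
  exact (Measurable.ite measurableSet_Ici (by fun_prop) measurable_const).ennreal_ofReal

lemma g2_measurable (l : ℝ) : Measurable (g2 l) := by
  unfold g2
  exact (Measurable.ite measurableSet_Ici (by fun_prop) measurable_const).ennreal_ofReal

lemma densR_measurable (l : ℝ) : Measurable fun x => ENNReal.ofReal (densR l x) := by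
  unfold densR
  exact (by fun_prop : Measurable fun x : ℝ => l / 4 * (1 + l * |x|) * Real.exp (-l * |x|)).ennreal_ofReal

lemma conv1 (l : ℝ) (hl : 0 < l) (x : ℝ) :
    ∫⁻ t, fexp l t * fexp l (x - t) = g2 l x := by
  have hpt : (fun t => fexp l t * fexp l (x - t))
      = (Icc 0 x).indicator (fun _ => ENNReal.ofReal (l ^ 2 * Real.exp (-l * x))) := by
    funext t
    by_cases ht : t ∈ Icc 0 x
    · rw [Set.indicator_of_mem ht]
      obtain ⟨ht0, htx⟩ := ht
      simp only [fexp, if_pos ht0, if_pos (by linarith : (0:ℝ) ≤ x - t)]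
      rw [← ENNReal.ofReal_mul (by positivity)]
      congr 1
      have he : Real.exp (-l * t) * Real.exp (-l * (x - t)) = Real.exp (-l * x) := by
        rw [← Real.exp_add]; congr 1; ring
      calc l * Real.exp (-l * t) * (l * Real.exp (-l * (x - t)))
          = l ^ 2 * (Real.exp (-l * t) * Real.exp (-l * (x - t))) := by ring
        _ = l ^ 2 * Real.exp (-l * x) := by rw [he]
    · rw [Set.indicator_of_notMem ht]
      rcases not_and_or.mp ht with h0 | hx
      · simp [fexp, h0]
      · simp [fexp, hx]
  rw [hpt, lintegral_indicator measurableSet_Icc, setLIntegral_const, Real.volume_Icc]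
  simp only [g2, sub_zero]
  by_cases hx : 0 ≤ x
  · rw [if_pos hx, ← ENNReal.ofReal_mul (by positivity)]
    congr 1; ring
  · rw [if_neg hx, ENNReal.ofReal_eq_zero.mpr (by linarith : x ≤ 0) ]
    simp

lemma tendsto_pow_mul_exp (c : ℝ) (hc : 0 < c) (n : ℕ) :
    Tendsto (fun t : ℝ => t ^ n * Real.exp (-c * t)) atTop (nhds 0) := by
  have h1 : Tendsto (fun t : ℝ => c * t) atTop atTop :=
    Filter.tendsto_id.const_mul_atTop hc
  have h2 := (Real.tendsto_pow_mul_exp_neg_atTop_nhds_zero n).comp h1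
  have h3 := h2.const_mul ((1 / c) ^ n)
  rw [mul_zero] at h3
  have heq : (fun t : ℝ => t ^ n * Real.exp (-c * t))
      = fun t : ℝ => (1 / c) ^ n * (((fun x : ℝ => x ^ n * Real.exp (-x)) ∘ fun t => c * t) t) := by
    funext t
    simp only [Function.comp_apply, neg_mul, mul_pow]
    have hc0 : c ≠ 0 := hc.ne'
    field_simp
    rw [mul_assoc, ← mul_pow, one_div, inv_mul_cancel₀ hc0, one_pow, mul_one]
  rw [heq]
  exact h3

lemma conv2 (l : ℝ) (hl : 0 < l) (x : ℝ) :
    ∫⁻ t, g2 l t * g2 l (t - x) = ENNReal.ofReal (densR l x) := by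
  have hl0 : l ≠ 0 := ne_of_gt hl
  have main : ∀ y : ℝ, 0 ≤ y → ∫⁻ t, g2 l t * g2 l (t - y)
      = ENNReal.ofReal (l / 4 * (1 + l * y) * Real.exp (-l * y)) := by
    intro y hy
    have hpt : (fun t => g2 l t * g2 l (t - y))
        = (Ioi y).indicator (fun t => ENNReal.ofReal
            ((l ^ 4 * Real.exp (l * y)) * ((t ^ 2 - y * t) * Real.exp (-(2 * l) * t)))) := by
      funext t
      by_cases ht : t ∈ Ioi y
      · rw [Set.indicator_of_mem ht]
        have htmem : y < t := ht
        have ht0 : (0:ℝ) ≤ t := le_trans hy htmem.le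
        have hty : (0:ℝ) ≤ t - y := by linarith
        simp only [g2, if_pos ht0, if_pos hty]
        rw [← ENNReal.ofReal_mul (by positivity)]
        congr 1
        have he : Real.exp (-l * t) * Real.exp (-l * (t - y))
            = Real.exp (l * y) * Real.exp (-(2 * l) * t) := by
          rw [← Real.exp_add, ← Real.exp_add]; congr 1; ring
        calc l ^ 2 * t * Real.exp (-l * t) * (l ^ 2 * (t - y) * Real.exp (-l * (t - y)))
            = l ^ 2 * t * (l ^ 2 * (t - y)) * (Real.exp (-l * t) * Real.exp (-l * (t - y))) := by
              ring
          _ = l ^ 2 * t * (l ^ 2 * (t - y)) * (Real.exp (l * y) * Real.exp (-(2 * l) * t)) := by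
              rw [he]
          _ = l ^ 4 * Real.exp (l * y) * ((t ^ 2 - y * t) * Real.exp (-(2 * l) * t)) := by ring
      · rw [Set.indicator_of_notMem ht]
        have hty : t ≤ y := not_lt.mp ht
        have hz : g2 l (t - y) = 0 := by
          simp only [g2]
          split_ifs with h
          · have h0 : t - y = 0 := le_antisymm (by linarith) h
            rw [h0]; simp
          · simp
        rw [hz, mul_zero]
    have hderiv : ∀ t ∈ Ici y, HasDerivAt
        (fun t : ℝ => -(Real.exp (-(2 * l) * t) *
          (t ^ 2 / (2 * l) + (((1 / l - y) / (2 * l)) * t + (1 / l - y) / (4 * l ^ 2)))))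
        ((t ^ 2 - y * t) * Real.exp (-(2 * l) * t)) t := by
      intro t _
      have h1 : HasDerivAt (fun t : ℝ => Real.exp (-(2 * l) * t))
          (Real.exp (-(2 * l) * t) * (-(2 * l) * 1)) t :=
        ((hasDerivAt_id t).const_mul (-(2 * l))).exp
      have h2 : HasDerivAt (fun t : ℝ => t ^ 2 / (2 * l)) (2 * t / (2 * l)) t := by
        simpa using (hasDerivAt_pow 2 t).div_const (2 * l)
      have h3 : HasDerivAt (fun t : ℝ => ((1 / l - y) / (2 * l)) * t) ((1 / l - y) / (2 * l)) t := by
        simpa using (hasDerivAt_id t).const_mul ((1 / l - y) / (2 * l))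
      have hp := h2.add (h3.add_const ((1 / l - y) / (4 * l ^ 2)))
      have hprod := (h1.mul hp).neg
      refine hprod.congr_deriv ?_
      simp only [Pi.add_apply]
      field_simp
      ring
    have g'pos : ∀ t ∈ Ioi y, 0 ≤ (t ^ 2 - y * t) * Real.exp (-(2 * l) * t) := by
      intro t ht
      have htmem : y < t := ht
      have h0 : (0:ℝ) ≤ t ^ 2 - y * t := by nlinarith
      exact mul_nonneg h0 (Real.exp_nonneg _)
    have hGt : Tendsto (fun t : ℝ => -(Real.exp (-(2 * l) * t) *
        (t ^ 2 / (2 * l) + (((1 / l - y) / (2 * l)) * t + (1 / l - y) / (4 * l ^ 2)))))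
        atTop (nhds 0) := by
      have h2 := tendsto_pow_mul_exp (2 * l) (by linarith) 2
      have h1 := tendsto_pow_mul_exp (2 * l) (by linarith) 1
      have h0 := tendsto_pow_mul_exp (2 * l) (by linarith) 0
      have hcomb := (((h2.const_mul (1 / (2 * l))).add
        ((h1.const_mul ((1 / l - y) / (2 * l))).add
          (h0.const_mul ((1 / l - y) / (4 * l ^ 2))))).neg)
      simp only [mul_zero, add_zero, neg_zero] at hcomb
      convert hcomb using 1
      funext t
      simp only [pow_one, pow_zero, one_mul]
      field_simp
    have hint := integral_Ioi_of_hasDerivAt_of_nonneg' hderiv g'pos hGt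
    have hintg : IntegrableOn (fun t => (t ^ 2 - y * t) * Real.exp (-(2 * l) * t)) (Ioi y) :=
      integrableOn_Ioi_deriv_of_nonneg' hderiv g'pos hGt
    rw [hpt, lintegral_indicator measurableSet_Ioi]
    have hInt2 : Integrable (fun t => (l ^ 4 * Real.exp (l * y)) *
        ((t ^ 2 - y * t) * Real.exp (-(2 * l) * t))) (volume.restrict (Ioi y)) :=
      hintg.const_mul _
    have hnn : 0 ≤ᵐ[volume.restrict (Ioi y)] fun t => (l ^ 4 * Real.exp (l * y)) *
        ((t ^ 2 - y * t) * Real.exp (-(2 * l) * t)) := by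
      refine (ae_restrict_iff' measurableSet_Ioi).2 (Filter.Eventually.of_forall fun t ht => ?_)
      exact mul_nonneg (by positivity) (g'pos t ht)
    rw [← ofReal_integral_eq_lintegral_ofReal hInt2 hnn]
    congr 1
    rw [integral_const_mul, hint, zero_sub, neg_neg]
    have hexp : Real.exp (l * y) * Real.exp (-(2 * l) * y) = Real.exp (-l * y) := by
      rw [← Real.exp_add]; congr 1; ring
    calc l ^ 4 * Real.exp (l * y) * (Real.exp (-(2 * l) * y) *
          (y ^ 2 / (2 * l) + (((1 / l - y) / (2 * l)) * y + (1 / l - y) / (4 * l ^ 2))))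
        = (Real.exp (l * y) * Real.exp (-(2 * l) * y)) *
          (l ^ 4 * (y ^ 2 / (2 * l) + (((1 / l - y) / (2 * l)) * y + (1 / l - y) / (4 * l ^ 2)))) := by
          ring
      _ = Real.exp (-l * y) * (l ^ 4 *
          (y ^ 2 / (2 * l) + (((1 / l - y) / (2 * l)) * y + (1 / l - y) / (4 * l ^ 2)))) := by
          rw [hexp]
      _ = l / 4 * (1 + l * y) * Real.exp (-l * y) := by
          field_simp
          ring
  rcases le_or_gt 0 x with hx | hx
  · rw [main x hx]
    unfold densR
    rw [abs_of_nonneg hx]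
  · have hsym : ∫⁻ t, g2 l t * g2 l (t - x) = ∫⁻ t, g2 l t * g2 l (t - (-x)) := by
      have h := lintegral_add_right_eq_self (μ := volume)
        (fun t => g2 l t * g2 l (t - x)) x
      calc ∫⁻ t, g2 l t * g2 l (t - x)
          = ∫⁻ t, g2 l (t + x) * g2 l (t + x - x) := h.symm
        _ = ∫⁻ t, g2 l t * g2 l (t - (-x)) := by
            congr 1; funext t
            rw [add_sub_cancel_right, mul_comm, sub_neg_eq_add]
    rw [hsym, main (-x) (by linarith)]
    unfold densR
    rw [abs_of_neg hx]

end Stmt4Aux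

/-- If `X₁, X₂, Y₁, Y₂` are i.i.d. Exponential(λ) and `R := (X₁ + Y₁ − X₂ − Y₂)/2`, then `R`
has density `x ↦ λ(λ|x| + 1/2) e^{−2λ|x|}` with respect to Lebesgue measure. -/
theorem stmt4 {Ω : Type*} [MeasurableSpace Ω] (P : Measure Ω) [IsProbabilityMeasure P]
    (l : ℝ) (hl : 0 < l)
    (X : Fin 4 → Ω → ℝ) (hm : ∀ i, Measurable (X i))
    (hdist : ∀ i, Measure.map (X i) P =
      volume.withDensity fun x =>
        ENNReal.ofReal (if 0 ≤ x then l * Real.exp (-l * x) else 0))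
    (hindep : iIndepFun X P) :
    Measure.map (fun ω => (X 0 ω + X 1 ω - X 2 ω - X 3 ω) / 2) P =
      volume.withDensity fun x =>
        ENNReal.ofReal (l * (l * |x| + 1 / 2) * Real.exp (-2 * l * |x|)) := by
  have hfm : Measurable (Stmt4Aux.fexp l) := Stmt4Aux.fexp_measurable l
  have hg2m : Measurable (Stmt4Aux.g2 l) := Stmt4Aux.g2_measurable l
  have law_sum : ∀ i j : Fin 4, i ≠ j →
      Measure.map (fun ω => X i ω + X j ω) P = volume.withDensity (Stmt4Aux.g2 l) := by
    intro i j hij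
    have hpair : Measure.map (fun ω => (X i ω, X j ω)) P
        = (Measure.map (X i) P).prod (Measure.map (X j) P) :=
      (indepFun_iff_map_prod_eq_prod_map_map (hm i).aemeasurable (hm j).aemeasurable).mp
        (hindep.indepFun hij)
    have hcomp : Measure.map (fun ω => X i ω + X j ω) P
        = Measure.map (fun p : ℝ × ℝ => p.1 + p.2) (Measure.map (fun ω => (X i ω, X j ω)) P) := by
      rw [Measure.map_map (g := fun p : ℝ × ℝ => p.1 + p.2) (f := fun ω => (X i ω, X j ω))
        (measurable_fst.add measurable_snd) ((hm i).prodMk (hm j))]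
      rfl
    rw [hcomp, hpair, hdist i, hdist j]
    have hfd : (fun x => ENNReal.ofReal (if 0 ≤ x then l * Real.exp (-l * x) else 0))
        = Stmt4Aux.fexp l := rfl
    rw [hfd, Stmt4Aux.map_add_withDensity _ _ hfm hfm]
    congr 1
    funext x
    exact Stmt4Aux.conv1 l hl x
  set U : Ω → ℝ := fun ω => X 0 ω + X 1 ω with hU
  set W : Ω → ℝ := fun ω => X 2 ω + X 3 ω with hW
  have hUm : Measurable U := (hm 0).add (hm 1)
  have hWm : Measurable W := (hm 2).add (hm 3)
  have hUlaw : Measure.map U P = volume.withDensity (Stmt4Aux.g2 l) :=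
    law_sum 0 1 (by decide)
  have hWlaw : Measure.map W P = volume.withDensity (Stmt4Aux.g2 l) :=
    law_sum 2 3 (by decide)
  have hNlaw : Measure.map (fun ω => -W ω) P
      = volume.withDensity (fun x => Stmt4Aux.g2 l (-x)) := by
    have hc : (fun ω => -W ω) = (fun x : ℝ => -x) ∘ W := rfl
    rw [hc, ← Measure.map_map measurable_neg hWm, hWlaw,
      Stmt4Aux.map_neg_withDensity _ hg2m]
  have hUW : IndepFun U W P := by
    have := hindep.indepFun_add_add hm 0 1 2 3
      (by decide) (by decide) (by decide) (by decide)
    exact this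
  have hUN : IndepFun U (fun ω => -W ω) P := hUW.comp measurable_id measurable_neg
  have hpair2 : Measure.map (fun ω => (U ω, -W ω)) P
      = (Measure.map U P).prod (Measure.map (fun ω => -W ω) P) :=
    (indepFun_iff_map_prod_eq_prod_map_map hUm.aemeasurable hWm.neg.aemeasurable).mp hUN
  have hD : Measure.map (fun ω => U ω + -W ω) P
      = volume.withDensity (fun x => ENNReal.ofReal (Stmt4Aux.densR l x)) := by
    have hcomp : Measure.map (fun ω => U ω + -W ω) P
        = Measure.map (fun p : ℝ × ℝ => p.1 + p.2)
            (Measure.map (fun ω => (U ω, -W ω)) P) := by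
      rw [Measure.map_map (g := fun p : ℝ × ℝ => p.1 + p.2) (f := fun ω => (U ω, -W ω))
        (measurable_fst.add measurable_snd) (hUm.prodMk hWm.neg)]
      rfl
    rw [hcomp, hpair2, hUlaw, hNlaw,
      Stmt4Aux.map_add_withDensity (Stmt4Aux.g2 l) (fun x => Stmt4Aux.g2 l (-x)) hg2m
        (hg2m.comp measurable_neg)]
    congr 1
    funext x
    have hre : (fun t => Stmt4Aux.g2 l t * Stmt4Aux.g2 l (-(x - t)))
        = fun t => Stmt4Aux.g2 l t * Stmt4Aux.g2 l (t - x) := by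
      funext t; rw [neg_sub]
    rw [hre]
    exact Stmt4Aux.conv2 l hl x
  have hfun : (fun ω => (X 0 ω + X 1 ω - X 2 ω - X 3 ω) / 2)
      = (fun x : ℝ => x / 2) ∘ (fun ω => U ω + -W ω) := by
    funext ω
    simp only [Function.comp_apply, hU, hW]
    ring
  rw [hfun, ← Measure.map_map (show Measurable fun x : ℝ => x / 2 from
    measurable_id.div_const 2) (f := fun ω => U ω + -W ω) (hUm.add hWm.neg), hD,
    Stmt4Aux.map_div_two_withDensity _ (Stmt4Aux.densR_measurable l)]
  congr 1
  funext x
  rw [← ENNReal.ofReal_mul (by norm_num)]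
  congr 1
  unfold Stmt4Aux.densR
  have h2 : |2 * x| = 2 * |x| := by rw [abs_mul]; norm_num
  rw [h2, show (-l * (2 * |x|) : ℝ) = -2 * l * |x| from by ring]
  ring
end

section
/- The coefficient of x^ℓ in the Laurent polynomial (x²/4 + 1/2 + 1/(4x²))^n equals C(2n, n + ℓ/2)/4^n for every even integer ℓ with |ℓ| ≤ 2n. -/
open LaurentPolynomial

/-- The coefficient of `x^ℓ` (with `ℓ = 2m` even, `|ℓ| ≤ 2n`) in the Laurent polynomial
`(x²/4 + 1/2 + 1/(4x²))^n` equals `C(2n, n + ℓ/2)/4^n`. -/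
theorem stmt10 (n : ℕ) (m : ℤ) (h : |2 * m| ≤ 2 * (n : ℤ)) :
    ((C (1 / 4 : ℚ) * T 2 + C (1 / 2) + C (1 / 4) * T (-2)) ^ n : LaurentPolynomial ℚ).coeff
        (2 * m) =
      (Nat.choose (2 * n) (n + m).toNat : ℚ) / 4 ^ n := by
  have hm : -(n : ℤ) ≤ m ∧ m ≤ n := by rw [abs_le] at h; omega
  have hbase : ((C (1 / 4 : ℚ) * T 2 + C (1 / 2) + C (1 / 4) * T (-2)) : LaurentPolynomial ℚ) =
      C (1/4 : ℚ) * (T 1 + T (-1))^2 := by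
    have key : ((T 1 + T (-1))^2 : LaurentPolynomial ℚ) = T 2 + 2 + T (-2) := by
      rw [add_sq,
        show ((T 1 : LaurentPolynomial ℚ))^2 = T 2 by rw [sq, ← T_add]; norm_num,
        show ((T (-1) : LaurentPolynomial ℚ))^2 = T (-2) by rw [sq, ← T_add]; norm_num,
        show ((2:LaurentPolynomial ℚ) * T 1 * T (-1)) = 2 by
          rw [mul_assoc, ← T_add]; norm_num [T_zero]]
    have hc : (C (1/2 : ℚ)) = C (1/4 : ℚ) * 2 := by
      rw [show (2 : LaurentPolynomial ℚ) = C 2 from (map_ofNat C 2).symm, ← map_mul]; norm_num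
    rw [key, mul_add, mul_add, hc]
  rw [hbase, mul_pow, ← pow_mul, ← map_pow, add_pow]
  rw [Finset.mul_sum]
  have hterm : ∀ k ∈ Finset.range (2 * n + 1),
      C ((1/4 : ℚ)^n) * ((T 1 : LaurentPolynomial ℚ) ^ k * T (-1) ^ (2*n - k) *
        (Nat.choose (2*n) k : LaurentPolynomial ℚ)) =
      AddMonoidAlgebra.single ((k : ℤ) * 2 - 2 * n) ((1/4:ℚ)^n * Nat.choose (2*n) k) := by
    intro k hk
    have hk' : k ≤ 2*n := by simp at hk; omega
    rw [T_pow, T_pow, ← T_add,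
      show ((Nat.choose (2*n) k : LaurentPolynomial ℚ)) = C (Nat.choose (2*n) k : ℚ) by simp,
      mul_comm (T _) (C _), ← mul_assoc, ← map_mul, single_eq_C_mul_T]
    congr 1
    push_cast [Nat.cast_sub hk']
    ring
  rw [Finset.sum_congr rfl hterm]
  rw [AddMonoidAlgebra.coeff_sum, Finsupp.finset_sum_apply]
  rw [Finset.sum_eq_single ((n + m).toNat)]
  · rw [AddMonoidAlgebra.coeff_single_apply, if_pos (by omega), one_div, inv_pow, inv_mul_eq_div]
  · intro k hk hne
    rw [AddMonoidAlgebra.coeff_single_apply, if_neg]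
    simp at hk
    omega
  · intro habs
    exfalso
    apply habs
    simp
    omega
end
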